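/- Let λ ∈ ℂ. For all k, p ∈ ℕ, φ(t^{k+p} (∏_{s=0}^{p−1}(1−q^{−2s}X)) X^k) = q^{p(λ+2k)} x^k y^p. Consequently φ : ℂ[t,tX] → ℂ[x,y] is a ℂ-linear isomorphism whose inverse sends x^k y^p to q^{−p(λ+2k)} t^{k+p} (∏_{s=0}^{p−1}(1−q^{−2s}X)) X^k. -/

import Mathlib

noncomputable section

open Finset

def qnum (q x : ℂ) : ℂ := (q ^ x - q ^ (-x)) / (q - q⁻¹)
def qfact (q : ℂ) (n : ℕ) : ℂ := ∏ s ∈ Finset.range n, qnum q ((s : ℂ) + 1)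
def qbinom (q : ℂ) (n k : ℕ) : ℂ := qfact q n / (qfact q k * qfact q (n - k))

abbrev P2 : Type := (ℕ × ℕ) →₀ ℂ
def mono (k l : ℕ) : P2 := Finsupp.single (k, l) 1

/-- The Laurent polynomial ring ℂ[t^{±1}, X^{±1}] containing ℂ[t,X]. -/
abbrev L2 : Type := AddMonoidAlgebra ℂ (ℤ × ℤ)

def tL : L2 := AddMonoidAlgebra.single (1, 0) 1
def XL : L2 := AddMonoidAlgebra.single (0, 1) 1
def tinv : L2 := AddMonoidAlgebra.single (-1, 0) 1
def Xinv : L2 := AddMonoidAlgebra.single (0, -1) 1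

/-- Substitution t ↦ c·t: scales the monomial t^a X^b by c^a. -/
def scT (c : ℂ) : L2 →ₗ[ℂ] L2 :=
  (Finsupp.lsum ℂ fun ab : ℤ × ℤ => LinearMap.toSpanSingleton ℂ L2
    ((c ^ ab.1) • (AddMonoidAlgebra.single ab 1 : L2))) ∘ₗ
    (AddMonoidAlgebra.coeffLinearEquiv ℂ).toLinearMap

/-- Substitution X ↦ c·X: scales the monomial t^a X^b by c^b. -/
def scX (c : ℂ) : L2 →ₗ[ℂ] L2 :=
  (Finsupp.lsum ℂ fun ab : ℤ × ℤ => LinearMap.toSpanSingleton ℂ L2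
    ((c ^ ab.2) • (AddMonoidAlgebra.single ab 1 : L2))) ∘ₗ
    (AddMonoidAlgebra.coeffLinearEquiv ℂ).toLinearMap

/-- The subspace ℂ[t,tX] = span{t^a X^b : b ≤ a}. -/
def spanTX : Submodule ℂ L2 :=
  Submodule.span ℂ {p : L2 | ∃ a b : ℕ, b ≤ a ∧ p = tL ^ a * XL ^ b}

/-- The map φ : ℂ[t,tX] → ℂ[x,y],
φ(t^a X^b) = Σ_{k=0}^{a−b} [a−b choose k] q^{(k+λ+2b)(a−b−k)} x^{k+b} y^{a−b−k}
(extended by zero outside ℂ[t,tX]). -/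
def phi (q lam : ℂ) : L2 →ₗ[ℂ] P2 :=
  (Finsupp.lsum ℂ fun ab : ℤ × ℤ => LinearMap.toSpanSingleton ℂ P2
    (if 0 ≤ ab.2 ∧ ab.2 ≤ ab.1 then
      ∑ k ∈ Finset.range ((ab.1 - ab.2).toNat + 1),
        (qbinom q (ab.1 - ab.2).toNat k
            * q ^ (((k : ℂ) + lam + 2 * (ab.2.toNat : ℂ))
                * (((ab.1 - ab.2).toNat : ℂ) - (k : ℂ))))
          • mono (k + ab.2.toNat) ((ab.1 - ab.2).toNat - k)
    else 0)) ∘ₗ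
    (AddMonoidAlgebra.coeffLinearEquiv ℂ).toLinearMap

/-! The basic identity is `φ(t(1 - X)u) = q^λ · y · φ(u(t, q²X))` for `u ∈ ℂ[t,tX]`; on a
monomial `t^{b+n+1}X^b - t^{b+n+1}X^{b+1}` it is the q-Pascal rule for the coefficients of `φ`.
Peeling the factor `s = 0` off `∏_{s<p+1}(1 - q^{-2s}X)` and rescaling `X ↦ q²X` turns the
remaining factors into those of the case `p`, which gives the formula for `φ` of the products by
induction on `p`. The products are unitriangular with respect to the monomials `t^{k+p}X^k`, so
they span `ℂ[t,tX]`: `x^k y^p ↦ q^{-p(λ+2k)} t^{k+p} ∏_{s<p}(1 - q^{-2s}X) X^k` is then a right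
inverse of `φ` whose image is exactly `ℂ[t,tX]`, and `φ` is bijective there. -/

lemma LinearMap.bijective_domRestrict_range {R M N : Type*} [Semiring R] [AddCommMonoid M]
    [AddCommMonoid N] [Module R M] [Module R N] {f : M →ₗ[R] N} {g : N →ₗ[R] M}
    (hfg : f ∘ₗ g = LinearMap.id) : Function.Bijective (f.domRestrict (LinearMap.range g)) := by
  have hfg' (w : N) : f (g w) = w := LinearMap.congr_fun hfg w
  refine ⟨?_, fun w => ⟨⟨g w, w, rfl⟩, hfg' w⟩⟩
  rintro ⟨_, w₁, rfl⟩ ⟨_, w₂, rfl⟩ h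
  have hw : w₁ = w₂ := by simpa [hfg'] using h
  rw [hw]

section QNumbers

variable {q : ℂ}

lemma qnum_add (hq0 : q ≠ 0) (a b : ℂ) :
    qnum q (a + b) = q ^ (-b) * qnum q a + q ^ a * qnum q b := by
  simp only [qnum, neg_add, Complex.cpow_add _ _ hq0, Complex.cpow_neg]
  have ha : q ^ a ≠ 0 := Complex.cpow_ne_zero_iff.mpr (Or.inl hq0)
  have hb : q ^ b ≠ 0 := Complex.cpow_ne_zero_iff.mpr (Or.inl hq0)
  field_simp
  ring

lemma qnum_natCast_ne_zero (hq0 : q ≠ 0) (hq : ∀ m : ℕ, 0 < m → q ^ m ≠ 1) {n : ℕ}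
    (hn : 0 < n) : qnum q n ≠ 0 := by
  have hqn : q ^ n ≠ 0 := pow_ne_zero n hq0
  rw [qnum, Complex.cpow_neg, Complex.cpow_natCast]
  refine div_ne_zero (fun h => hq (2 * n) (by omega) ?_) (fun h => hq 2 two_pos ?_)
  · rw [pow_mul', sq]
    field_simp at h
    linear_combination h
  · field_simp at h
    linear_combination h

lemma qfact_succ (n : ℕ) : qfact q (n + 1) = qfact q n * qnum q (n + 1) :=
  prod_range_succ _ _

lemma qfact_ne_zero (hq0 : q ≠ 0) (hq : ∀ m : ℕ, 0 < m → q ^ m ≠ 1) (n : ℕ) :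
    qfact q n ≠ 0 :=
  prod_ne_zero_iff.mpr fun s _ => by exact_mod_cast qnum_natCast_ne_zero hq0 hq s.succ_pos

lemma qfact_zero : qfact q 0 = 1 := prod_range_zero _

lemma qbinom_zero_right (hq0 : q ≠ 0) (hq : ∀ m : ℕ, 0 < m → q ^ m ≠ 1) (n : ℕ) :
    qbinom q n 0 = 1 := by
  rw [qbinom, Nat.sub_zero, qfact_zero, one_mul, div_self (qfact_ne_zero hq0 hq n)]

lemma qbinom_self (hq0 : q ≠ 0) (hq : ∀ m : ℕ, 0 < m → q ^ m ≠ 1) (n : ℕ) :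
    qbinom q n n = 1 := by
  rw [qbinom, Nat.sub_self, qfact_zero, mul_one, div_self (qfact_ne_zero hq0 hq n)]

lemma qbinom_succ_succ (hq0 : q ≠ 0) (hq : ∀ m : ℕ, 0 < m → q ^ m ≠ 1) {n k : ℕ}
    (hk : k < n) :
    qbinom q (n + 1) (k + 1)
      = q ^ (-((k : ℂ) + 1)) * qbinom q n (k + 1) + q ^ ((n : ℂ) - k) * qbinom q n k := by
  obtain ⟨m, rfl⟩ := Nat.exists_eq_add_of_lt hk
  have hnum : qnum q ((k + m + 1 : ℕ) + 1)
      = q ^ (-((k : ℂ) + 1)) * qnum q (m + 1) + q ^ ((m : ℂ) + 1) * qnum q (k + 1) := by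
    rw [← qnum_add hq0]; push_cast; ring_nf
  have hexp : ((k + m + 1 : ℕ) : ℂ) - k = m + 1 := by push_cast; ring
  simp only [qbinom, hexp, show k + m + 1 + 1 - (k + 1) = m + 1 by omega,
    show k + m + 1 - (k + 1) = m by omega, show k + m + 1 - k = m + 1 by omega,
    qfact_succ (k + m + 1), qfact_succ k, qfact_succ m, hnum]
  have hfact := qfact_ne_zero hq0 hq
  have hk' : qnum q (k + 1) ≠ 0 := by exact_mod_cast qnum_natCast_ne_zero hq0 hq k.succ_pos
  have hm' : qnum q (m + 1) ≠ 0 := by exact_mod_cast qnum_natCast_ne_zero hq0 hq m.succ_pos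
  field_simp [hfact]

end QNumbers

lemma tL_pow_mul_XL_pow (a b : ℕ) :
    tL ^ a * XL ^ b = AddMonoidAlgebra.single ((a : ℤ), (b : ℤ)) 1 := by
  simp [tL, XL, AddMonoidAlgebra.single_pow, AddMonoidAlgebra.single_mul_single]

lemma scX_single (c : ℂ) (ab : ℤ × ℤ) (r : ℂ) :
    scX c (AddMonoidAlgebra.single ab r) = AddMonoidAlgebra.single ab (c ^ ab.2 * r) := by
  simp [scX, mul_comm]

lemma scX_one (c : ℂ) : scX c 1 = 1 := by
  simp [AddMonoidAlgebra.one_def, scX_single]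

lemma scX_mul {c : ℂ} (hc : c ≠ 0) (u v : L2) : scX c (u * v) = scX c u * scX c v := by
  induction u using AddMonoidAlgebra.induction_linear with
  | zero => simp
  | add f g hf hg => simp only [add_mul, map_add, hf, hg]
  | single a r =>
    induction v using AddMonoidAlgebra.induction_linear with
    | zero => simp
    | add f g hf hg => simp only [mul_add, map_add, hf, hg]
    | single b s =>
      simp only [AddMonoidAlgebra.single_mul_single, scX_single, Prod.snd_add, zpow_add₀ hc]
      ring_nf

def scXAlgHom {c : ℂ} (hc : c ≠ 0) : L2 →ₐ[ℂ] L2 :=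
  AlgHom.ofLinearMap (scX c) (scX_one c) (scX_mul hc)

lemma scX_tL (c : ℂ) : scX c tL = tL := by
  simp [tL, scX_single]

lemma scX_XL (c : ℂ) : scX c XL = c • XL := by
  simp [XL, scX_single]

def tXProd (c : ℕ → ℂ) (m j k : ℕ) : L2 :=
  tL ^ m * (∏ s ∈ range j, (1 - c s • XL)) * XL ^ k

section TXProd

variable (c : ℕ → ℂ)

lemma tXProd_zero (m k : ℕ) : tXProd c m 0 k = tL ^ m * XL ^ k := by
  simp [tXProd]

lemma tXProd_succ (m j k : ℕ) :
    tXProd c m (j + 1) k = tXProd c m j k - c j • tXProd c m j (k + 1) := by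
  simp only [tXProd, prod_range_succ, Algebra.smul_def]
  ring

lemma tXProd_succ_succ (m j k : ℕ) :
    tXProd c (m + 1) (j + 1) k = tL * (1 - c 0 • XL) * tXProd (fun s => c (s + 1)) m j k := by
  simp only [tXProd, prod_range_succ']
  ring

lemma scX_tXProd {a : ℂ} (ha : a ≠ 0) (m j k : ℕ) :
    scX a (tXProd c m j k) = a ^ k • tXProd (fun s => a * c s) m j k := by
  change scXAlgHom ha (tXProd c m j k) = _
  simp only [tXProd, map_mul, map_pow, map_prod, map_sub, map_one, map_smul]
  simp only [scXAlgHom, AlgHom.ofLinearMap_apply, scX_tL, scX_XL, smul_pow, smul_smul,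
    mul_comm (c _), mul_smul_comm]

lemma tXProd_mem_spanTX {m j k : ℕ} (h : j + k ≤ m) : tXProd c m j k ∈ spanTX := by
  induction j generalizing k with
  | zero => exact Submodule.subset_span ⟨m, k, by omega, (tXProd_zero c m k)⟩
  | succ j ih =>
    rw [tXProd_succ]
    exact sub_mem (ih (by omega)) (Submodule.smul_mem _ _ (ih (by omega)))

lemma spanTX_le {V : Submodule ℂ L2} (hV : ∀ k p, tXProd c (k + p) p k ∈ V) :
    spanTX ≤ V := by
  have key : ∀ p j k, j ≤ p → tXProd c (k + p) j k ∈ V := by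
    intro p
    induction p with
    | zero =>
      intro j k hj
      obtain rfl : j = 0 := by omega
      exact hV k 0
    | succ p ih =>
      intro j k hj
      induction hj using Nat.decreasingInduction with
      | self => exact hV k (p + 1)
      | of_succ j hj hmem =>
        -- `tXProd_succ` trades the last factor for a term with one more `X` and smaller `p`.
        have hlow : tXProd c (k + (p + 1)) j (k + 1) ∈ V := by
          rw [show k + (p + 1) = k + 1 + p by omega]
          exact ih j (k + 1) (by omega)
        simpa [tXProd_succ] using add_mem hmem (Submodule.smul_mem _ (c j) hlow)
  refine Submodule.span_le.mpr ?_
  rintro _ ⟨a, b, hba, rfl⟩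
  obtain ⟨n, rfl⟩ := Nat.exists_eq_add_of_le hba
  simpa [tXProd_zero] using key n 0 b n.zero_le

end TXProd

def mulY : P2 →ₗ[ℂ] P2 := Finsupp.lmapDomain ℂ ℂ fun kl : ℕ × ℕ => (kl.1, kl.2 + 1)

lemma mulY_mono (k l : ℕ) : mulY (mono k l) = mono k (l + 1) := by
  simp [mulY, mono]

def phiCoeff (q lam : ℂ) (b n k : ℕ) : ℂ :=
  qbinom q n k * q ^ (((k : ℂ) + lam + 2 * b) * ((n : ℂ) - k))

def psi (q lam : ℂ) : P2 →ₗ[ℂ] L2 :=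
  Finsupp.linearCombination ℂ fun kp : ℕ × ℕ =>
    q ^ (-(kp.2 : ℂ) * (lam + 2 * kp.1))
      • tXProd (fun s => q ^ (-2 * (s : ℤ))) (kp.1 + kp.2) kp.2 kp.1

section Phi

variable {q : ℂ} (lam : ℂ)

lemma phi_tL_pow_mul_XL_pow (b n : ℕ) :
    phi q lam (tL ^ (b + n) * XL ^ b)
      = ∑ k ∈ range (n + 1), phiCoeff q lam b n k • mono (k + b) (n - k) := by
  simp [phi, phiCoeff, tL_pow_mul_XL_pow]

lemma phiCoeff_self (hq0 : q ≠ 0) (hq : ∀ m : ℕ, 0 < m → q ^ m ≠ 1) (b n : ℕ) :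
    phiCoeff q lam b n n = 1 := by
  simp [phiCoeff, qbinom_self hq0 hq]

lemma phiCoeff_succ_zero (hq0 : q ≠ 0) (hq : ∀ m : ℕ, 0 < m → q ^ m ≠ 1) (b n : ℕ) :
    phiCoeff q lam b (n + 1) 0 = q ^ (lam + 2 * b) * phiCoeff q lam b n 0 := by
  simp only [phiCoeff, qbinom_zero_right hq0 hq, one_mul, ← Complex.cpow_add _ _ hq0]
  push_cast
  ring_nf

lemma phiCoeff_succ_succ (hq0 : q ≠ 0) (hq : ∀ m : ℕ, 0 < m → q ^ m ≠ 1) (b : ℕ)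
    {n k : ℕ} (hk : k < n) :
    phiCoeff q lam b (n + 1) (k + 1) - phiCoeff q lam (b + 1) n k
      = q ^ (lam + 2 * b) * phiCoeff q lam b n (k + 1) := by
  have e1 : q ^ (-((k : ℂ) + 1)) * q ^ ((k + 1 + lam + 2 * b) * (n + 1 - (k + 1)))
      = q ^ (lam + 2 * b) * q ^ ((k + 1 + lam + 2 * b) * (n - (k + 1))) := by
    simp only [← Complex.cpow_add _ _ hq0]; ring_nf
  have e2 : q ^ ((n : ℂ) - k) * q ^ ((k + 1 + lam + 2 * b) * (n + 1 - (k + 1)))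
      = q ^ ((k + lam + 2 * (b + 1)) * ((n : ℂ) - k)) := by
    rw [← Complex.cpow_add _ _ hq0]; ring_nf
  simp only [phiCoeff, qbinom_succ_succ hq0 hq hk]
  push_cast
  linear_combination qbinom q n (k + 1) * e1 + qbinom q n k * e2

lemma phi_sub_phi_eq_smul_mulY (hq0 : q ≠ 0) (hq : ∀ m : ℕ, 0 < m → q ^ m ≠ 1)
    (b n : ℕ) :
    phi q lam (tL ^ (b + (n + 1)) * XL ^ b) - phi q lam (tL ^ (b + 1 + n) * XL ^ (b + 1))
      = q ^ (lam + 2 * b) • mulY (phi q lam (tL ^ (b + n) * XL ^ b)) := by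
  simp only [phi_tL_pow_mul_XL_pow, map_sum, map_smul, mulY_mono, smul_sum, smul_smul]
  rw [sum_range_succ' _ (n + 1), sum_range_succ _ n, sum_range_succ _ n, sum_range_succ' _ n]
  have hbottom : phiCoeff q lam b (n + 1) 0 • mono (0 + b) (n + 1 - 0)
      = (q ^ (lam + 2 * b) * phiCoeff q lam b n 0) • mono (0 + b) (n - 0 + 1) := by
    rw [phiCoeff_succ_zero lam hq0 hq, Nat.sub_zero, Nat.sub_zero]
  have htop : phiCoeff q lam b (n + 1) (n + 1) • mono (n + 1 + b) (n + 1 - (n + 1))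
      = phiCoeff q lam (b + 1) n n • mono (n + (b + 1)) (n - n) := by
    rw [phiCoeff_self lam hq0 hq, phiCoeff_self lam hq0 hq, Nat.sub_self, Nat.sub_self,
      Nat.add_right_comm, add_assoc]
  have hmiddle :
      ∑ k ∈ range n, phiCoeff q lam b (n + 1) (k + 1) • mono (k + 1 + b) (n + 1 - (k + 1))
        - ∑ k ∈ range n, phiCoeff q lam (b + 1) n k • mono (k + (b + 1)) (n - k)
      = ∑ k ∈ range n, (q ^ (lam + 2 * b) * phiCoeff q lam b n (k + 1))
          • mono (k + 1 + b) (n - (k + 1) + 1) := by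
    rw [← sum_sub_distrib]
    refine sum_congr rfl fun k hk => ?_
    have hk : k < n := mem_range.mp hk
    rw [← phiCoeff_succ_succ lam hq0 hq b hk, sub_smul,
      show n + 1 - (k + 1) = n - (k + 1) + 1 by omega, show n - k = n - (k + 1) + 1 by omega,
      show k + (b + 1) = k + 1 + b by omega]
  rw [hbottom, htop, ← hmiddle]
  abel

lemma phi_tL_mul_one_sub_XL_mul (hq0 : q ≠ 0) (hq : ∀ m : ℕ, 0 < m → q ^ m ≠ 1) {u : L2}
    (hu : u ∈ spanTX) :
    phi q lam (tL * (1 - XL) * u) = q ^ lam • mulY (phi q lam (scX (q ^ 2) u)) := by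
  have h := LinearMap.eqOn_span' (f := phi q lam ∘ₗ LinearMap.mulLeft ℂ (tL * (1 - XL)))
    (g := q ^ lam • (mulY ∘ₗ phi q lam ∘ₗ scX (q ^ 2))) ?_ hu
  · simpa [mul_assoc] using h
  rintro _ ⟨a, b, hba, rfl⟩
  obtain ⟨n, rfl⟩ := Nat.exists_eq_add_of_le hba
  have hsplit : tL * (1 - XL) * (tL ^ (b + n) * XL ^ b)
      = tL ^ (b + (n + 1)) * XL ^ b - tL ^ (b + 1 + n) * XL ^ (b + 1) := by ring
  have hscale : scX (q ^ 2) (tL ^ (b + n) * XL ^ b) = q ^ (2 * b) • (tL ^ (b + n) * XL ^ b) := by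
    simp [tL_pow_mul_XL_pow, scX_single, pow_mul]
  have hexp : q ^ (lam + 2 * b) = q ^ lam * q ^ (2 * b) := by
    rw [Complex.cpow_add _ _ hq0, ← Complex.cpow_natCast]; push_cast; rfl
  simp only [LinearMap.comp_apply, LinearMap.mulLeft_apply, LinearMap.smul_apply, hsplit, map_sub,
    phi_sub_phi_eq_smul_mulY lam hq0 hq, hscale, map_smul, smul_smul, hexp]

lemma phi_tXProd (hq0 : q ≠ 0) (hq : ∀ m : ℕ, 0 < m → q ^ m ≠ 1) (k p : ℕ) :
    phi q lam (tXProd (fun s => q ^ (-2 * (s : ℤ))) (k + p) p k)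
      = q ^ ((p : ℂ) * (lam + 2 * k)) • mono k p := by
  induction p with
  | zero =>
    rw [tXProd_zero, phi_tL_pow_mul_XL_pow]
    simp [phiCoeff_self lam hq0 hq]
  | succ p ih =>
    have hshift : (fun s : ℕ => q ^ 2 * q ^ (-2 * ((s + 1 : ℕ) : ℤ)))
        = fun s : ℕ => q ^ (-2 * (s : ℤ)) := by
      funext s
      rw [← zpow_natCast, ← zpow_add₀ hq0]
      push_cast
      ring_nf
    have hexp : q ^ lam * (q ^ 2) ^ k * q ^ ((p : ℂ) * (lam + 2 * k))
        = q ^ (((p + 1 : ℕ) : ℂ) * (lam + 2 * k)) := by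
      rw [← pow_mul, ← Complex.cpow_natCast, ← Complex.cpow_add _ _ hq0,
        ← Complex.cpow_add _ _ hq0]
      push_cast
      ring_nf
    rw [← add_assoc, tXProd_succ_succ, Nat.cast_zero, mul_zero, zpow_zero, one_smul,
      phi_tL_mul_one_sub_XL_mul lam hq0 hq (tXProd_mem_spanTX _ (Nat.add_comm p k).le),
      scX_tXProd _ (pow_ne_zero 2 hq0), hshift, map_smul, map_smul, ih, map_smul, mulY_mono,
      smul_smul, smul_smul, hexp]

lemma phi_smul_tXProd (hq0 : q ≠ 0) (hq : ∀ m : ℕ, 0 < m → q ^ m ≠ 1) (k p : ℕ) :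
    phi q lam (q ^ (-(p : ℂ) * (lam + 2 * k))
      • tXProd (fun s => q ^ (-2 * (s : ℤ))) (k + p) p k) = mono k p := by
  rw [map_smul, phi_tXProd lam hq0 hq, smul_smul, neg_mul, Complex.cpow_neg,
    inv_mul_cancel₀ (Complex.cpow_ne_zero_iff.mpr (Or.inl hq0)), one_smul]

lemma phi_comp_psi (hq0 : q ≠ 0) (hq : ∀ m : ℕ, 0 < m → q ^ m ≠ 1) :
    phi q lam ∘ₗ psi q lam = LinearMap.id :=
  Finsupp.lhom_ext fun kp r => by
    rw [LinearMap.comp_apply, psi, Finsupp.linearCombination_single, map_smul,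
      phi_smul_tXProd lam hq0 hq, mono, Finsupp.smul_single_one, LinearMap.id_apply]

lemma range_psi (hq0 : q ≠ 0) : LinearMap.range (psi q lam) = spanTX := by
  rw [psi, Finsupp.range_linearCombination]
  refine le_antisymm (Submodule.span_le.mpr ?_)
    (spanTX_le (fun s => q ^ (-2 * (s : ℤ))) fun k p => ?_)
  · rintro _ ⟨kp, rfl⟩
    exact Submodule.smul_mem _ _ (tXProd_mem_spanTX _ (Nat.add_comm _ _).le)
  · convert Submodule.smul_mem _ (q ^ ((p : ℂ) * (lam + 2 * k)))
      (Submodule.subset_span (Set.mem_range_self (k, p))) using 1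
    rw [smul_smul, neg_mul, Complex.cpow_neg,
      mul_inv_cancel₀ (Complex.cpow_ne_zero_iff.mpr (Or.inl hq0)), one_smul]

end Phi

/-- **The linear isomorphism φ : ℂ[t,tX] → ℂ[x,y]** (Lemma 3.5).
For all k, p: φ(t^{k+p} ∏_{s=0}^{p−1}(1−q^{−2s}X) X^k) = q^{p(λ+2k)} x^k y^p;
consequently φ restricted to ℂ[t,tX] is a linear isomorphism onto ℂ[x,y] whose
inverse sends x^k y^p to q^{−p(λ+2k)} t^{k+p} ∏_{s=0}^{p−1}(1−q^{−2s}X) X^k. -/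
theorem phi_isomorphism (q : ℂ) (hq0 : q ≠ 0)
    (hq : ∀ m : ℕ, 0 < m → q ^ m ≠ 1) (lam : ℂ) :
    (∀ k p : ℕ,
      phi q lam (tL ^ (k + p)
          * (∏ s ∈ Finset.range p, (1 - (q ^ (-2 * (s : ℤ))) • XL)) * XL ^ k)
        = (q ^ ((p : ℂ) * (lam + 2 * (k : ℂ)))) • mono k p) ∧
    Function.Bijective ((phi q lam).domRestrict spanTX) ∧
    (∀ k p : ℕ,
      (tL ^ (k + p) * (∏ s ∈ Finset.range p, (1 - (q ^ (-2 * (s : ℤ))) • XL)) * XL ^ k)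
          ∈ spanTX ∧
      phi q lam ((q ^ (-(p : ℂ) * (lam + 2 * (k : ℂ)))) •
          (tL ^ (k + p) * (∏ s ∈ Finset.range p, (1 - (q ^ (-2 * (s : ℤ))) • XL)) * XL ^ k))
        = mono k p) := by
  refine ⟨phi_tXProd lam hq0 hq, ?_, fun k p =>
    ⟨tXProd_mem_spanTX _ (Nat.add_comm p k).le, phi_smul_tXProd lam hq0 hq k p⟩⟩
  rw [← range_psi lam hq0]
  exact LinearMap.bijective_domRestrict_range (phi_comp_psi lam hq0 hq)
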